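/- Let C be a Hom-finite, Krull–Schmidt, k-linear triangulated category, (X,Y) a maximal rigid torsion pair in C, and D a subcategory satisfying condition (RF) with D ⊆ X ⊆ (D[-1])⊥. Then the D-mutation (μ⁻¹(X;D), μ⁻¹(Y;D[1])) is again a maximal rigid torsion pair. -/

import Mathlib

open CategoryTheory CategoryTheory.Limits CategoryTheory.Pretriangulated

variable {C : Type*} [Category C] [Preadditive C] [HasZeroObject C]
  [HasShift C ℤ] [∀ n : ℤ, (shiftFunctor C n).Additive] [Pretriangulated C]

/-- `Hom(𝒳, 𝒴) = 0`. -/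
def homZero (𝒳 𝒴 : Set C) : Prop :=
  ∀ ⦃A B : C⦄, A ∈ 𝒳 → B ∈ 𝒴 → ∀ f : A ⟶ B, f = 0

/-- The shift `𝒳[n]` of a subcategory (closed under isomorphisms). -/
def shiftSet (𝒳 : Set C) (n : ℤ) : Set C :=
  {Z | ∃ A ∈ 𝒳, Nonempty ((A⟦n⟧) ≅ Z)}

/-- The class `𝒳 * 𝒴` of extensions. -/
def extClass (𝒳 𝒴 : Set C) : Set C :=
  {Z | ∃ (A B : C) (f : A ⟶ Z) (g : Z ⟶ B) (h : B ⟶ A⟦(1:ℤ)⟧),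
      A ∈ 𝒳 ∧ B ∈ 𝒴 ∧ Triangle.mk f g h ∈ distTriang C}

/-- A torsion pair: `Hom(𝒳,𝒴) = 0` and `C = 𝒳 * 𝒴`. -/
def IsTorsionPair (𝒳 𝒴 : Set C) : Prop :=
  homZero 𝒳 𝒴 ∧ ∀ Z : C, Z ∈ extClass 𝒳 𝒴

/-- A cotorsion pair: `Hom(𝒳,𝒲[1]) = 0` and `C = 𝒳 * 𝒲[1]`. -/
def IsCotorsionPair (𝒳 𝒲 : Set C) : Prop :=
  IsTorsionPair 𝒳 (shiftSet 𝒲 (1:ℤ))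

/-- Full subcategory closed under isomorphisms, finite direct sums and direct summands. -/
structure IsSubcat (𝒳 : Set C) : Prop where
  mem_of_iso : ∀ ⦃A B : C⦄, (A ≅ B) → A ∈ 𝒳 → B ∈ 𝒳
  biprod_mem : ∀ ⦃A B : C⦄, A ∈ 𝒳 → B ∈ 𝒳 → (A ⊞ B) ∈ 𝒳
  mem_of_biprod : ∀ ⦃A B : C⦄, (A ⊞ B) ∈ 𝒳 → A ∈ 𝒳 ∧ B ∈ 𝒳

/-- `⊥(𝒟[1]) = {M : Hom(M, 𝒟[1]) = 0}`. -/
def leftPerpShift (𝒟 : Set C) : Set C :=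
  {M : C | ∀ D ∈ 𝒟, ∀ f : M ⟶ (D⟦(1:ℤ)⟧), f = 0}

/-- `(𝒟[-1])⊥ = {M : Hom(𝒟[-1], M) = 0}`. -/
def shiftRightPerp (𝒟 : Set C) : Set C :=
  {M : C | ∀ D ∈ 𝒟, ∀ f : (D⟦(-1:ℤ)⟧) ⟶ M, f = 0}

/-- `A` admits a left `𝒟`-approximation. -/
def HasLeftApprox (𝒟 : Set C) (A : C) : Prop :=
  ∃ D ∈ 𝒟, ∃ f : A ⟶ D, ∀ D' ∈ 𝒟, ∀ g : A ⟶ D', ∃ h : D ⟶ D', f ≫ h = g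

/-- `A` admits a right `𝒟`-approximation. -/
def HasRightApprox (𝒟 : Set C) (A : C) : Prop :=
  ∃ D ∈ 𝒟, ∃ f : D ⟶ A, ∀ D' ∈ 𝒟, ∀ g : D' ⟶ A, ∃ h : D' ⟶ D, h ≫ f = g

/-- `μ⁻¹(ℳ;𝒟) = (𝒟 * ℳ[1]) ∩ ⊥(𝒟[1])`. -/
def muInv (ℳ 𝒟 : Set C) : Set C :=
  extClass 𝒟 (shiftSet ℳ (1:ℤ)) ∩ leftPerpShift 𝒟

/-- `μ(𝒩;𝒟) = (𝒩[-1] * 𝒟) ∩ (𝒟[-1])⊥`. -/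
def mu (𝒩 𝒟 : Set C) : Set C :=
  extClass (shiftSet 𝒩 (-1:ℤ)) 𝒟 ∩ shiftRightPerp 𝒟

/-- `(ℳ,𝒩)` is a `𝒟`-mutation pair. -/
def IsMutationPair (ℳ 𝒩 𝒟 : Set C) : Prop :=
  ℳ = mu 𝒩 𝒟 ∧ 𝒩 = muInv ℳ 𝒟

/-- Condition (RF): `𝒟` is functorially finite, rigid and `⊥(𝒟[1]) = (𝒟[-1])⊥`. -/
def RF (𝒟 : Set C) : Prop :=
  (∀ A : C, HasLeftApprox 𝒟 A) ∧ (∀ A : C, HasRightApprox 𝒟 A) ∧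
    homZero 𝒟 (shiftSet 𝒟 (1:ℤ)) ∧ leftPerpShift 𝒟 = shiftRightPerp 𝒟

/-- The Ext-injective objects of `𝒳`. -/
def extInj (𝒳 : Set C) : Set C :=
  {T : C | T ∈ 𝒳 ∧ ∀ A ∈ 𝒳, ∀ f : A ⟶ (T⟦(1:ℤ)⟧), f = 0}

/-- The Ext-projective objects of `𝒴`. -/
def extProj (𝒴 : Set C) : Set C :=
  {T : C | T ∈ 𝒴 ∧ ∀ B ∈ 𝒴, ∀ f : T ⟶ (B⟦(1:ℤ)⟧), f = 0}

/-- `𝒳` is maximal rigid. -/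
def IsMaximalRigid (𝒳 : Set C) : Prop :=
  homZero 𝒳 (shiftSet 𝒳 (1:ℤ)) ∧
  ∀ M : C, (∀ X₁ ∈ 𝒳, ∀ X₂ ∈ 𝒳, ∀ f : (M ⊞ X₁) ⟶ ((M ⊞ X₂)⟦(1:ℤ)⟧), f = 0) → M ∈ 𝒳

/-!
Write `𝒳' = μ⁻¹(𝒳;𝒟)` and `𝒴' = μ⁻¹(𝒴;𝒟[1])`. Most vanishing statements come from comparing
two triangles `A → M → B → A[1]` and `A' → N → B' → A'[1]`: once `Hom(A, N)` and `Hom(B, B')`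
vanish, every map `M → N` factors as `M → B → A' → N`. This gives `Hom(𝒳', 𝒴') = 0` and the
rigidity of `𝒳'`.

To decompose an object `Z`, complete a right `𝒟`-approximation `D → Z → E` to a right
`𝒳'`-approximation `D ⊕ X → Z`, where `X → E` comes from the torsion decomposition of `E[-1]`
and the cone of a left `𝒟`-approximation of its torsion part. The cone `N` of `D ⊕ X → Z`
satisfies `Hom(𝒳', N) = 0`, and every such `N` lies in `𝒴'`.

For maximality, let `L → D → M → L[1]` be the cocone of a right `𝒟`-approximation of `M`.
The hypotheses on `M` make `Hom(L ⊕ X₁, (L ⊕ X₂)[1])` vanish for `X₁, X₂ ∈ 𝒳`. So `L ∈ 𝒳` by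
maximality of `𝒳`, and `M ∈ 𝒟 * L[1]`.
-/

open ZeroObject

section

variable {𝒞 : Type*} [Category 𝒞] [HasZeroMorphisms 𝒞]

lemma forall_eq_zero_iff_subsingleton {A B : 𝒞} :
    (∀ f : A ⟶ B, f = 0) ↔ Subsingleton (A ⟶ B) :=
  ⟨fun h => ⟨fun f g => (h f).trans (h g).symm⟩, fun _ f => Subsingleton.elim f 0⟩

lemma forall_eq_zero_congr {A B A' B' : 𝒞} (e : (A ⟶ B) ≃ (A' ⟶ B')) :
    (∀ f : A ⟶ B, f = 0) ↔ ∀ f : A' ⟶ B', f = 0 := by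
  simpa only [forall_eq_zero_iff_subsingleton] using e.subsingleton_congr

lemma forall_eq_zero_iso_iff {A B A' B' : 𝒞} (eA : A ≅ A') (eB : B ≅ B') :
    (∀ f : A ⟶ B, f = 0) ↔ ∀ f : A' ⟶ B', f = 0 :=
  forall_eq_zero_congr (eA.homCongr eB)

lemma forall_biprod_hom_eq_zero_iff {A B P : 𝒞} [HasBinaryBiproduct A B] :
    (∀ f : A ⊞ B ⟶ P, f = 0) ↔ (∀ f : A ⟶ P, f = 0) ∧ ∀ f : B ⟶ P, f = 0 :=
  ⟨fun h => ⟨fun f => by simpa using congrArg (biprod.inl ≫ ·) (h (biprod.fst ≫ f)),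
      fun f => by simpa using congrArg (biprod.inr ≫ ·) (h (biprod.snd ≫ f))⟩,
    fun h f => biprod.hom_ext' _ _ (by simp [h.1 (biprod.inl ≫ f)])
      (by simp [h.2 (biprod.inr ≫ f)])⟩

lemma forall_hom_biprod_eq_zero_iff {A P Q : 𝒞} [HasBinaryBiproduct P Q] :
    (∀ f : A ⟶ P ⊞ Q, f = 0) ↔ (∀ f : A ⟶ P, f = 0) ∧ ∀ f : A ⟶ Q, f = 0 :=
  ⟨fun h => ⟨fun f => by simpa using congrArg (· ≫ biprod.fst) (h (f ≫ biprod.inl)),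
      fun f => by simpa using congrArg (· ≫ biprod.snd) (h (f ≫ biprod.inr))⟩,
    fun h f => biprod.hom_ext _ _ (by simp [h.1 (f ≫ biprod.fst)])
      (by simp [h.2 (f ≫ biprod.snd)])⟩

variable [HasShift 𝒞 ℤ]

lemma forall_shift_eq_zero_iff (n : ℤ) {A B : 𝒞} :
    (∀ f : A⟦n⟧ ⟶ B⟦n⟧, f = 0) ↔ ∀ f : A ⟶ B, f = 0 :=
  (forall_eq_zero_congr (Functor.FullyFaithful.ofFullyFaithful (shiftFunctor 𝒞 n)).homEquiv).symm

lemma forall_shift_neg_one_eq_zero_iff {A B : 𝒞} :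
    (∀ f : A⟦(-1:ℤ)⟧ ⟶ B, f = 0) ↔ ∀ f : A ⟶ B⟦(1:ℤ)⟧, f = 0 :=
  forall_eq_zero_congr ((shiftEquiv 𝒞 (1:ℤ)).symm.toAdjunction.homEquiv A B)

end

section

variable {𝒳 𝒴 𝒟 : Set C}

lemma forall_biprod_shift_eq_zero_iff {M X₁ X₂ : C} :
    (∀ f : M ⊞ X₁ ⟶ (M ⊞ X₂)⟦(1:ℤ)⟧, f = 0) ↔
      ((∀ f : M ⟶ M⟦(1:ℤ)⟧, f = 0) ∧ ∀ f : M ⟶ X₂⟦(1:ℤ)⟧, f = 0) ∧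
        ((∀ f : X₁ ⟶ M⟦(1:ℤ)⟧, f = 0) ∧ ∀ f : X₁ ⟶ X₂⟦(1:ℤ)⟧, f = 0) := by
  have := preservesBinaryBiproducts_of_preservesBiproducts (shiftFunctor C (1:ℤ))
  rw [forall_eq_zero_iso_iff (Iso.refl _) ((shiftFunctor C (1:ℤ)).mapBiprod M X₂),
    forall_biprod_hom_eq_zero_iff, forall_hom_biprod_eq_zero_iff, forall_hom_biprod_eq_zero_iff]

lemma shift_mem_shiftSet {A : C} (hA : A ∈ 𝒳) (n : ℤ) : A⟦n⟧ ∈ shiftSet 𝒳 n :=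
  ⟨A, hA, ⟨Iso.refl _⟩⟩

lemma forall_mem_shiftSet_iff {n : ℤ} {P : C → Prop} (hP : ∀ ⦃A B : C⦄, (A ≅ B) → P A → P B) :
    (∀ B ∈ shiftSet 𝒳 n, P B) ↔ ∀ A ∈ 𝒳, P (A⟦n⟧) :=
  ⟨fun h _ hA => h _ (shift_mem_shiftSet hA n), fun h _ ⟨_, hA, ⟨e⟩⟩ => hP e (h _ hA)⟩

lemma homZero_shiftSet_iff {n : ℤ} :
    homZero 𝒳 (shiftSet 𝒴 n) ↔ ∀ X ∈ 𝒳, ∀ Y ∈ 𝒴, ∀ f : X ⟶ Y⟦n⟧, f = 0 := by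
  refine ⟨fun h X hX Y hY => h hX (shift_mem_shiftSet hY n), ?_⟩
  rintro h X _ hX ⟨Y, hY, ⟨e⟩⟩
  exact (forall_eq_zero_iso_iff (Iso.refl X) e).1 (h X hX Y hY)

lemma homZero.shiftSet (h : homZero 𝒳 𝒴) (n : ℤ) : homZero (shiftSet 𝒳 n) (shiftSet 𝒴 n) := by
  rintro _ _ ⟨X, hX, ⟨eX⟩⟩ ⟨Y, hY, ⟨eY⟩⟩
  exact (forall_eq_zero_iso_iff eX eY).1 ((forall_shift_eq_zero_iff n).2 (h hX hY))

lemma forall_eq_zero_of_mem_leftPerpShift {M B : C} (hM : M ∈ leftPerpShift 𝒟)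
    (hB : B ∈ shiftSet 𝒟 1) : ∀ f : M ⟶ B, f = 0 := by
  obtain ⟨D, hD, ⟨e⟩⟩ := hB
  exact (forall_eq_zero_iso_iff (Iso.refl M) e).1 (hM D hD)

lemma mem_leftPerpShift_iff (hE : leftPerpShift 𝒟 = shiftRightPerp 𝒟) {M : C} :
    M ∈ leftPerpShift 𝒟 ↔ ∀ D ∈ 𝒟, ∀ f : D ⟶ M⟦(1:ℤ)⟧, f = 0 := by
  rw [hE]
  exact forall₂_congr fun _ _ => forall_shift_neg_one_eq_zero_iff

lemma mem_leftPerpShift_shiftSet_iff (hE : leftPerpShift 𝒟 = shiftRightPerp 𝒟) {N : C} :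
    N ∈ leftPerpShift (shiftSet 𝒟 1) ↔ ∀ D ∈ 𝒟, ∀ f : D ⟶ N, f = 0 := by
  calc N ∈ leftPerpShift (shiftSet 𝒟 1) ↔ ∀ D ∈ 𝒟, ∀ f : N ⟶ D⟦(1:ℤ)⟧⟦(1:ℤ)⟧, f = 0 :=
        forall_mem_shiftSet_iff fun _ _ e =>
          (forall_eq_zero_iso_iff (Iso.refl N) ((shiftFunctor C (1:ℤ)).mapIso e)).1
    _ ↔ N⟦(-1:ℤ)⟧ ∈ shiftRightPerp 𝒟 := by
        rw [← hE]; exact forall₂_congr fun _ _ => forall_shift_neg_one_eq_zero_iff.symm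
    _ ↔ ∀ D ∈ 𝒟, ∀ f : D ⟶ N, f = 0 := forall₂_congr fun _ _ => forall_shift_eq_zero_iff _

lemma mem_extClass_of_distTriang {T : Triangle C} (hT : T ∈ distTriang C) (h₁ : T.obj₁ ∈ 𝒳)
    (h₃ : T.obj₃ ∈ 𝒴) : T.obj₂ ∈ extClass 𝒳 𝒴 :=
  ⟨T.obj₁, T.obj₃, T.mor₁, T.mor₂, T.mor₃, h₁, h₃, hT⟩

lemma mem_extClass_of_distTriang_of_iso {T : Triangle C} (hT : T ∈ distTriang C) {A Z B : C}
    (e₁ : T.obj₁ ≅ A) (e₂ : T.obj₂ ≅ Z) (e₃ : T.obj₃ ≅ B) (hA : A ∈ 𝒳) (hB : B ∈ 𝒴) :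
    Z ∈ extClass 𝒳 𝒴 := by
  refine ⟨A, B, e₁.inv ≫ T.mor₁ ≫ e₂.hom, e₂.inv ≫ T.mor₂ ≫ e₃.hom,
    e₃.inv ≫ T.mor₃ ≫ e₁.hom⟦(1:ℤ)⟧', hA, hB, isomorphic_distinguished _ hT _ ?_⟩
  refine Triangle.isoMk _ _ e₁.symm e₂.symm e₃.symm ?_ ?_ ?_ <;>
    simp [Triangle.mk, ← Functor.map_comp]

lemma mem_extClass_of_iso {Z Z' : C} (e : Z ≅ Z') (hZ : Z ∈ extClass 𝒳 𝒴) :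
    Z' ∈ extClass 𝒳 𝒴 := by
  obtain ⟨A, B, f, g, h, hA, hB, hT⟩ := hZ
  exact mem_extClass_of_distTriang_of_iso hT (Iso.refl A) e (Iso.refl B) hA hB

lemma shift_mem_extClass {Z : C} (hZ : Z ∈ extClass 𝒳 𝒴) (n : ℤ) :
    Z⟦n⟧ ∈ extClass (shiftSet 𝒳 n) (shiftSet 𝒴 n) := by
  obtain ⟨A, B, f, g, h, hA, hB, hT⟩ := hZ
  exact mem_extClass_of_distTriang (Triangle.shift_distinguished _ hT n)
    (shift_mem_shiftSet hA n) (shift_mem_shiftSet hB n)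

noncomputable def piBoolIsoBiprod (g : Bool → C) : ∏ᶜ g ≅ g false ⊞ g true where
  hom := biprod.lift (Pi.π g false) (Pi.π g true)
  inv := Pi.lift fun b => Bool.rec biprod.fst biprod.snd b
  hom_inv_id := Pi.hom_ext _ _ (by rintro (_ | _) <;> simp)
  inv_hom_id := by apply biprod.hom_ext <;> simp

lemma biprod_mem_extClass (h𝒳 : ∀ ⦃A B : C⦄, A ∈ 𝒳 → B ∈ 𝒳 → (A ⊞ B) ∈ 𝒳)
    (h𝒴 : ∀ ⦃A B : C⦄, A ∈ 𝒴 → B ∈ 𝒴 → (A ⊞ B) ∈ 𝒴) {Z₁ Z₂ : C}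
    (hZ₁ : Z₁ ∈ extClass 𝒳 𝒴) (hZ₂ : Z₂ ∈ extClass 𝒳 𝒴) : (Z₁ ⊞ Z₂) ∈ extClass 𝒳 𝒴 := by
  obtain ⟨A₁, B₁, f₁, g₁, h₁, hA₁, hB₁, hT₁⟩ := hZ₁
  obtain ⟨A₂, B₂, f₂, g₂, h₂, hA₂, hB₂, hT₂⟩ := hZ₂
  let T : Bool → Triangle C := fun b => Bool.rec (Triangle.mk f₁ g₁ h₁) (Triangle.mk f₂ g₂ h₂) b
  have hT : productTriangle T ∈ distTriang C :=
    productTriangle_distinguished T (by rintro (_ | _) <;> assumption)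
  exact mem_extClass_of_distTriang_of_iso hT (piBoolIsoBiprod fun b => (T b).obj₁)
    (piBoolIsoBiprod fun b => (T b).obj₂) (piBoolIsoBiprod fun b => (T b).obj₃)
    (h𝒳 hA₁ hA₂) (h𝒴 hB₁ hB₂)

lemma IsSubcat.zero_mem (h : IsSubcat 𝒳) {A : C} (hA : A ∈ 𝒳) : (0 : C) ∈ 𝒳 :=
  (h.mem_of_biprod (h.mem_of_iso (isoBiprodZero (isZero_zero C)) hA)).2

lemma IsSubcat.zero_mem_shiftSet (h : IsSubcat 𝒳) {A : C} (hA : A ∈ 𝒳) (n : ℤ) :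
    (0 : C) ∈ shiftSet 𝒳 n :=
  ⟨0, h.zero_mem hA, ⟨((shiftFunctor C n).map_isZero (isZero_zero C)).isoZero⟩⟩

lemma IsSubcat.biprod_mem_shiftSet (h : IsSubcat 𝒳) {n : ℤ} {A B : C}
    (hA : A ∈ shiftSet 𝒳 n) (hB : B ∈ shiftSet 𝒳 n) : (A ⊞ B) ∈ shiftSet 𝒳 n := by
  obtain ⟨X, hX, ⟨eX⟩⟩ := hA
  obtain ⟨Y, hY, ⟨eY⟩⟩ := hB
  have := preservesBinaryBiproducts_of_preservesBiproducts (shiftFunctor C n)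
  exact ⟨X ⊞ Y, h.biprod_mem hX hY, ⟨(shiftFunctor C n).mapBiprod X Y ≪≫ biprod.mapIso eX eY⟩⟩

lemma IsTorsionPair.shift (h : IsTorsionPair 𝒳 𝒴) :
    IsTorsionPair (shiftSet 𝒳 1) (shiftSet 𝒴 1) :=
  ⟨h.1.shiftSet 1, fun E =>
    mem_extClass_of_iso ((shiftEquiv C (1:ℤ)).counitIso.app E) (shift_mem_extClass (h.2 _) 1)⟩

lemma IsTorsionPair.mem_of_forall_eq_zero (h : IsTorsionPair 𝒳 𝒴) (h𝒴 : IsSubcat 𝒴) {Y : C}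
    (hY : ∀ X ∈ 𝒳, ∀ f : X ⟶ Y, f = 0) : Y ∈ 𝒴 := by
  obtain ⟨X, Y', a, b, c, hX, hY', hT⟩ := h.2 Y
  obtain ⟨e, -⟩ := exists_iso_binaryBiproduct_of_distTriang _ (rot_of_distTriang _ hT)
    (show -a⟦(1:ℤ)⟧' = 0 by rw [hY X hX a, Functor.map_zero, neg_zero])
  exact (h𝒴.mem_of_biprod (h𝒴.mem_of_iso e hY')).1

lemma exists_eq_comp_comp_of_distTriang {T T' : Triangle C} (hT : T ∈ distTriang C)
    (hT' : T' ∈ distTriang C) (h₁ : ∀ f : T.obj₁ ⟶ T'.obj₂, f = 0)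
    (h₃ : ∀ f : T.obj₃ ⟶ T'.obj₃, f = 0) (u : T.obj₂ ⟶ T'.obj₂) :
    ∃ w : T.obj₃ ⟶ T'.obj₁, u = T.mor₂ ≫ w ≫ T'.mor₁ := by
  obtain ⟨v, rfl⟩ := T.yoneda_exact₂ hT u (h₁ _)
  obtain ⟨w, rfl⟩ := T'.coyoneda_exact₂ hT' v (h₃ _)
  exact ⟨w, rfl⟩

lemma eq_zero_of_distTriang {T T' : Triangle C} (hT : T ∈ distTriang C)
    (hT' : T' ∈ distTriang C) (h₁ : ∀ f : T.obj₁ ⟶ T'.obj₂, f = 0)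
    (h₃ : ∀ f : T.obj₃ ⟶ T'.obj₃, f = 0) (h₂ : ∀ f : T.obj₂ ⟶ T'.obj₁, f = 0)
    (u : T.obj₂ ⟶ T'.obj₂) : u = 0 := by
  obtain ⟨w, rfl⟩ := exists_eq_comp_comp_of_distTriang hT hT' h₁ h₃ u
  rw [← Category.assoc, h₂ (T.mor₂ ≫ w), zero_comp]

lemma exists_eq_mor₁_comp_of_distTriang {T : Triangle C} (hT : T ∈ distTriang C) {W : C}
    (hW : ∀ f : T.obj₃ ⟶ W⟦(1:ℤ)⟧, f = 0) (g : T.obj₁ ⟶ W) :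
    ∃ b : T.obj₂ ⟶ W, g = T.mor₁ ≫ b :=
  Triangle.yoneda_exact₂ _ (inv_rot_of_distTriang _ hT) g (forall_shift_neg_one_eq_zero_iff.2 hW _)

lemma forall_obj₁_shift_obj₁_eq_zero {T : Triangle C} (hT : T ∈ distTriang C)
    (h₁₂ : ∀ f : T.obj₁ ⟶ T.obj₂⟦(1:ℤ)⟧, f = 0) (h₂₁ : ∀ f : T.obj₂ ⟶ T.obj₁⟦(1:ℤ)⟧, f = 0)
    (h₃₃ : ∀ f : T.obj₃ ⟶ T.obj₃⟦(1:ℤ)⟧, f = 0) : ∀ f : T.obj₁ ⟶ T.obj₁⟦(1:ℤ)⟧, f = 0 := by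
  intro u
  obtain ⟨u', rfl⟩ := T.coyoneda_exact₁ hT u (h₁₂ _)
  obtain ⟨g, rfl⟩ := exists_eq_mor₁_comp_of_distTriang hT h₃₃ u'
  rw [Category.assoc, h₂₁ (g ≫ T.mor₃), comp_zero]

def IsRightApprox (𝒮 : Set C) {M A : C} (p : M ⟶ A) : Prop :=
  ∀ S ∈ 𝒮, ∀ g : S ⟶ A, ∃ h : S ⟶ M, h ≫ p = g

lemma IsRightApprox.forall_eq_zero_obj₃ {𝒮 : Set C} (h𝒮 : homZero 𝒮 (shiftSet 𝒮 1))
    {T : Triangle C} (hT : T ∈ distTriang C) (h₁ : T.obj₁ ∈ 𝒮) (hp : IsRightApprox 𝒮 T.mor₁) :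
    ∀ S ∈ 𝒮, ∀ f : S ⟶ T.obj₃, f = 0 := by
  intro S hS f
  obtain ⟨g, rfl⟩ := T.coyoneda_exact₃ hT f (h𝒮 hS (shift_mem_shiftSet h₁ 1) _)
  obtain ⟨h, rfl⟩ := hp S hS g
  rw [Category.assoc, comp_distTriang_mor_zero₁₂ _ hT, comp_zero]

lemma isRightApprox_biprod_desc {𝒮 : Set C} {T : Triangle C} (hT : T ∈ distTriang C) {X : C}
    {q : X ⟶ T.obj₂} (hq : IsRightApprox 𝒮 (q ≫ T.mor₂)) :
    IsRightApprox 𝒮 (biprod.desc T.mor₁ q) := by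
  intro S hS w
  obtain ⟨χ, hχ⟩ := hq S hS (w ≫ T.mor₂)
  obtain ⟨ω, hω⟩ := T.coyoneda_exact₂ hT (w - χ ≫ q) (by simp [← hχ])
  exact ⟨biprod.lift ω χ, by simp [← hω]⟩

lemma subset_muInv (hX : IsSubcat 𝒳) (hrig : homZero 𝒟 (shiftSet 𝒟 1)) (hDX : 𝒟 ⊆ 𝒳) :
    𝒟 ⊆ muInv 𝒳 𝒟 := fun D hD =>
  ⟨mem_extClass_of_distTriang (contractible_distinguished D) hD
    (hX.zero_mem_shiftSet (hDX hD) 1), fun _ hD' => hrig hD (shift_mem_shiftSet hD' 1)⟩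

lemma biprod_mem_muInv (hX : IsSubcat 𝒳) (hD : IsSubcat 𝒟) {A B : C} (hA : A ∈ muInv 𝒳 𝒟)
    (hB : B ∈ muInv 𝒳 𝒟) : (A ⊞ B) ∈ muInv 𝒳 𝒟 :=
  ⟨biprod_mem_extClass hD.biprod_mem (fun _ _ => hX.biprod_mem_shiftSet) hA.1 hB.1,
    fun D hD' => forall_biprod_hom_eq_zero_iff.2 ⟨hA.2 D hD', hB.2 D hD'⟩⟩

theorem homZero_muInv (h𝒳𝒴 : homZero 𝒳 𝒴) (hE : leftPerpShift 𝒟 = shiftRightPerp 𝒟) :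
    homZero (muInv 𝒳 𝒟) (muInv 𝒴 (shiftSet 𝒟 1)) := by
  rintro M N ⟨⟨A, B, f₁, f₂, f₃, hA, hB, hTM⟩, hM⟩ ⟨⟨A', B', g₁, g₂, g₃, hA', hB', hTN⟩, hN⟩
  exact eq_zero_of_distTriang hTM hTN ((mem_leftPerpShift_shiftSet_iff hE).1 hN A hA)
    (h𝒳𝒴.shiftSet 1 hB hB') (forall_eq_zero_of_mem_leftPerpShift hM hA')

theorem muInv_rigid (h𝒳 : homZero 𝒳 (shiftSet 𝒳 1)) (hE : leftPerpShift 𝒟 = shiftRightPerp 𝒟) :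
    homZero (muInv 𝒳 𝒟) (shiftSet (muInv 𝒳 𝒟) 1) := by
  refine homZero_shiftSet_iff.2 ?_
  rintro M ⟨⟨A, B, f₁, f₂, f₃, hA, hB, hTM⟩, hM⟩ M' ⟨⟨A', B', g₁, g₂, g₃, hA', hB', hTM'⟩, hM'⟩
  exact eq_zero_of_distTriang hTM (Triangle.shift_distinguished _ hTM' 1)
    ((mem_leftPerpShift_iff hE).1 hM' A hA) (h𝒳.shiftSet 1 hB (shift_mem_shiftSet hB' 1))
    (hM A' hA')

lemma exists_distTriang_muInv (hrig : homZero 𝒟 (shiftSet 𝒟 1))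
    (hleft : ∀ A : C, HasLeftApprox 𝒟 A) {X : C} (hX : X ∈ 𝒳) :
    ∃ D ∈ 𝒟, ∃ T ∈ muInv 𝒳 𝒟, ∃ (f : X ⟶ D) (d : D ⟶ T) (e : T ⟶ X⟦(1:ℤ)⟧),
      Triangle.mk f d e ∈ distTriang C := by
  obtain ⟨D, hD, f, hf⟩ := hleft X
  obtain ⟨T, d, e, hT⟩ := distinguished_cocone_triangle f
  refine ⟨D, hD, T, ⟨mem_extClass_of_distTriang (rot_of_distTriang _ hT) hD
    (shift_mem_shiftSet hX 1), fun D' hD' g => ?_⟩, f, d, e, hT⟩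
  obtain ⟨h, rfl⟩ := Triangle.yoneda_exact₃ _ hT g (hrig hD (shift_mem_shiftSet hD' 1) _)
  obtain ⟨h₀, rfl⟩ := (shiftFunctor C (1:ℤ)).map_surjective h
  obtain ⟨σ, rfl⟩ := hf D' hD' h₀
  have h₃₁ : e ≫ f⟦(1:ℤ)⟧' = 0 := comp_distTriang_mor_zero₃₁ _ hT
  show e ≫ (f ≫ σ)⟦(1:ℤ)⟧' = 0
  rw [Functor.map_comp, reassoc_of% h₃₁, zero_comp]

lemma exists_eq_comp_of_forall_muInv (hrig : homZero 𝒟 (shiftSet 𝒟 1))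
    (hleft : ∀ A : C, HasLeftApprox 𝒟 A) {X W : C} (hX : X ∈ 𝒳)
    (hW : ∀ T ∈ muInv 𝒳 𝒟, ∀ f : T ⟶ W⟦(1:ℤ)⟧, f = 0) (g : X ⟶ W) :
    ∃ D ∈ 𝒟, ∃ (a : X ⟶ D) (b : D ⟶ W), g = a ≫ b := by
  obtain ⟨D, hD, T, hT, f, d, e, hTr⟩ := exists_distTriang_muInv hrig hleft hX
  obtain ⟨b, rfl⟩ := exists_eq_mor₁_comp_of_distTriang hTr (hW T hT) g
  exact ⟨D, hD, f, b, rfl⟩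

lemma eq_zero_of_forall_comp_shift_eq_zero (hrig : homZero 𝒟 (shiftSet 𝒟 1))
    (hleft : ∀ A : C, HasLeftApprox 𝒟 A) {X P : C} (hX : X ∈ 𝒳)
    (hP : ∀ T ∈ muInv 𝒳 𝒟, ∀ f : P ⟶ T, f = 0) (g : P ⟶ X⟦(1:ℤ)⟧)
    (hg : ∀ D ∈ 𝒟, ∀ a : X ⟶ D, g ≫ a⟦(1:ℤ)⟧' = 0) : g = 0 := by
  obtain ⟨D, hD, T, hT, f, d, e, hTr⟩ := exists_distTriang_muInv hrig hleft hX
  obtain ⟨c, rfl⟩ : ∃ c : P ⟶ T, g = c ≫ e := Triangle.coyoneda_exact₁ _ hTr g (hg D hD f)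
  rw [hP T hT c, zero_comp]

lemma exists_muInv_isRightApprox_leftPerpShift (hrig : homZero 𝒟 (shiftSet 𝒟 1))
    (hleft : ∀ A : C, HasLeftApprox 𝒟 A) {B : C} (hB : B ∈ shiftSet 𝒳 1) :
    ∃ X ∈ muInv 𝒳 𝒟, ∃ e : X ⟶ B, IsRightApprox (leftPerpShift 𝒟) e := by
  obtain ⟨X₀, hX₀, ⟨eB⟩⟩ := hB
  obtain ⟨D, hD, X, hX, f, d, e, hT⟩ := exists_distTriang_muInv hrig hleft hX₀
  refine ⟨X, hX, e ≫ eB.hom, fun P hP g => ?_⟩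
  obtain ⟨χ, hχ⟩ : ∃ χ : P ⟶ X, g ≫ eB.inv = χ ≫ e :=
    Triangle.coyoneda_exact₁ _ hT _ (hP D hD _)
  exact ⟨χ, by rw [← Category.assoc, ← hχ, Category.assoc, Iso.inv_hom_id, Category.comp_id]⟩

lemma exists_muInv_isRightApprox (hpair : IsTorsionPair 𝒳 𝒴) (hrig : homZero 𝒟 (shiftSet 𝒟 1))
    (hleft : ∀ A : C, HasLeftApprox 𝒟 A) {E : C} (hE : ∀ D ∈ 𝒟, ∀ f : D ⟶ E, f = 0) :
    ∃ X ∈ muInv 𝒳 𝒟, ∃ q : X ⟶ E, IsRightApprox (muInv 𝒳 𝒟) q := by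
  obtain ⟨B, Y, α, β, γ, hB, hY, hT⟩ := hpair.shift.2 E
  obtain ⟨X, hX, e, he⟩ := exists_muInv_isRightApprox_leftPerpShift hrig hleft hB
  refine ⟨X, hX, e ≫ α, ?_⟩
  rintro M ⟨⟨A', B', g₁, g₂, g₃, hA', hB', hTM⟩, hM⟩ w
  obtain ⟨ψ, rfl⟩ : ∃ ψ : B' ⟶ B, w = g₂ ≫ ψ ≫ α :=
    exists_eq_comp_comp_of_distTriang hTM hT (hE A' hA') (hpair.shift.1 hB' hY) w
  obtain ⟨χ, hχ⟩ := he M hM (g₂ ≫ ψ)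
  exact ⟨χ, by rw [reassoc_of% hχ]⟩

theorem mem_muInv_shiftSet_of_forall_eq_zero (hpair : IsTorsionPair 𝒳 𝒴) (hX : IsSubcat 𝒳)
    (hY : IsSubcat 𝒴) (hRF : RF 𝒟) (hDX : 𝒟 ⊆ 𝒳) (hXD : 𝒳 ⊆ leftPerpShift 𝒟) {N : C}
    (hN : ∀ T ∈ muInv 𝒳 𝒟, ∀ f : T ⟶ N, f = 0) : N ∈ muInv 𝒴 (shiftSet 𝒟 1) := by
  have ε : N⟦(-1:ℤ)⟧⟦(1:ℤ)⟧ ≅ N := (shiftEquiv C (1:ℤ)).counitIso.app N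
  refine ⟨mem_extClass_of_iso ε (shift_mem_extClass ?_ 1), (mem_leftPerpShift_shiftSet_iff
    hRF.2.2.2).2 fun D hD => hN D (subset_muInv hX hRF.2.2.1 hDX hD)⟩
  obtain ⟨D, hD, r, hr⟩ := hRF.2.1 (N⟦(-1:ℤ)⟧)
  obtain ⟨Y, s, u, hT⟩ := distinguished_cocone_triangle r
  refine mem_extClass_of_distTriang hT hD (hpair.mem_of_forall_eq_zero hY fun X hX' φ => ?_)
  obtain ⟨φ', rfl⟩ : ∃ φ' : X ⟶ N⟦(-1:ℤ)⟧, φ = φ' ≫ s :=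
    Triangle.coyoneda_exact₃ _ hT φ (hXD hX' D hD _)
  obtain ⟨D', hD', a, b, rfl⟩ := exists_eq_comp_of_forall_muInv hRF.2.2.1 hRF.1 hX'
    (fun T hT => (forall_eq_zero_iso_iff (Iso.refl T) ε.symm).1 (hN T hT)) φ'
  obtain ⟨σ, rfl⟩ := hr D' hD' b
  have h₁₂ : r ≫ s = 0 := comp_distTriang_mor_zero₁₂ _ hT
  show (a ≫ σ ≫ r) ≫ s = 0
  rw [Category.assoc, Category.assoc, h₁₂, comp_zero, comp_zero]

theorem isTorsionPair_muInv (hpair : IsTorsionPair 𝒳 𝒴) (hX : IsSubcat 𝒳) (hY : IsSubcat 𝒴)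
    (hD : IsSubcat 𝒟) (h𝒳 : homZero 𝒳 (shiftSet 𝒳 1)) (hRF : RF 𝒟) (hDX : 𝒟 ⊆ 𝒳)
    (hXD : 𝒳 ⊆ leftPerpShift 𝒟) : IsTorsionPair (muInv 𝒳 𝒟) (muInv 𝒴 (shiftSet 𝒟 1)) := by
  refine ⟨homZero_muInv hpair.1 hRF.2.2.2, fun Z => ?_⟩
  obtain ⟨D, hD₀, i, hi⟩ := hRF.2.1 Z
  obtain ⟨E, π, δ, hT⟩ := distinguished_cocone_triangle i
  obtain ⟨X, hX₁, q, hq⟩ := exists_muInv_isRightApprox hpair hRF.2.2.1 hRF.1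
    (IsRightApprox.forall_eq_zero_obj₃ hRF.2.2.1 hT hD₀ hi)
  obtain ⟨q', rfl⟩ : ∃ q' : X ⟶ Z, q = q' ≫ π := Triangle.coyoneda_exact₃ _ hT q (hX₁.2 D hD₀ _)
  have hM : (D ⊞ X) ∈ muInv 𝒳 𝒟 :=
    biprod_mem_muInv hX hD (subset_muInv hX hRF.2.2.1 hDX hD₀) hX₁
  obtain ⟨N, n, δ', hTN⟩ := distinguished_cocone_triangle (biprod.desc i q')
  refine mem_extClass_of_distTriang hTN hM
    (mem_muInv_shiftSet_of_forall_eq_zero hpair hX hY hRF hDX hXD ?_)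
  exact IsRightApprox.forall_eq_zero_obj₃ (muInv_rigid h𝒳 hRF.2.2.2) hTN hM
    (isRightApprox_biprod_desc hT hq)

lemma forall_obj₁_shift_eq_zero_of_mem (hrig : homZero 𝒟 (shiftSet 𝒟 1))
    (hleft : ∀ A : C, HasLeftApprox 𝒟 A) {T : Triangle C} (hT : T ∈ distTriang C) {X : C}
    (hX : X ∈ 𝒳) (h₁ : T.obj₁ ∈ leftPerpShift 𝒟) (h₂ : ∀ f : T.obj₂ ⟶ X⟦(1:ℤ)⟧, f = 0)
    (h₃ : ∀ T' ∈ muInv 𝒳 𝒟, ∀ f : T.obj₃ ⟶ T'⟦(1:ℤ)⟧, f = 0) :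
    ∀ f : T.obj₁ ⟶ X⟦(1:ℤ)⟧, f = 0 := by
  intro u
  let m : T.obj₃⟦(-1:ℤ)⟧ ⟶ T.obj₁ := T.invRotate.mor₁
  have hm : m ≫ u = 0 :=
    eq_zero_of_forall_comp_shift_eq_zero hrig hleft hX
      (fun T' hT' => forall_shift_neg_one_eq_zero_iff.2 (h₃ T' hT')) _
      fun D hD a => by rw [Category.assoc, h₁ D hD (u ≫ a⟦(1:ℤ)⟧'), comp_zero]
  obtain ⟨v, rfl⟩ : ∃ v : T.obj₂ ⟶ X⟦(1:ℤ)⟧, u = T.mor₁ ≫ v :=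
    Triangle.yoneda_exact₂ _ (inv_rot_of_distTriang _ hT) u hm
  rw [h₂ v, comp_zero]

lemma forall_shift_obj₁_eq_zero_of_mem (hrig : homZero 𝒟 (shiftSet 𝒟 1))
    (hleft : ∀ A : C, HasLeftApprox 𝒟 A) {T : Triangle C} (hT : T ∈ distTriang C) {X : C}
    (hX : X ∈ 𝒳) (hX' : X ∈ leftPerpShift 𝒟) (h₁ : ∀ D ∈ 𝒟, ∀ f : D ⟶ T.obj₁⟦(1:ℤ)⟧, f = 0)
    (h₂ : T.obj₂ ∈ 𝒟) (h₃ : ∀ T' ∈ muInv 𝒳 𝒟, ∀ f : T' ⟶ T.obj₃⟦(1:ℤ)⟧, f = 0) :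
    ∀ f : X ⟶ T.obj₁⟦(1:ℤ)⟧, f = 0 := by
  intro v
  obtain ⟨v', rfl⟩ : ∃ v' : X ⟶ T.obj₃, v = v' ≫ T.mor₃ := T.coyoneda_exact₁ hT v (hX' _ h₂ _)
  obtain ⟨D, hD, a, b, rfl⟩ := exists_eq_comp_of_forall_muInv hrig hleft hX h₃ v'
  rw [Category.assoc, h₁ D hD (b ≫ T.mor₃), comp_zero]

theorem isMaximalRigid_muInv (hX : IsSubcat 𝒳) (hmax : IsMaximalRigid 𝒳) (hRF : RF 𝒟)
    (hDX : 𝒟 ⊆ 𝒳) (hXD : 𝒳 ⊆ leftPerpShift 𝒟) : IsMaximalRigid (muInv 𝒳 𝒟) := by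
  refine ⟨muInv_rigid hmax.1 hRF.2.2.2, fun M hM => ?_⟩
  have h𝒟 := subset_muInv hX hRF.2.2.1 hDX
  have hM' : ∀ T ∈ muInv 𝒳 𝒟,
      (∀ f : M ⟶ T⟦(1:ℤ)⟧, f = 0) ∧ ∀ f : T ⟶ M⟦(1:ℤ)⟧, f = 0 := fun T hT =>
    have h := forall_biprod_shift_eq_zero_iff.1 (hM T hT T hT)
    ⟨h.1.2, h.2.1⟩
  obtain ⟨D, hD, r, hr⟩ := hRF.2.1 M
  have hMM := (forall_biprod_shift_eq_zero_iff.1 (hM D (h𝒟 hD) D (h𝒟 hD))).1.1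
  obtain ⟨L, l, h, hT⟩ := distinguished_cocone_triangle₁ r
  have hDL : ∀ D' ∈ 𝒟, ∀ f : D' ⟶ L⟦(1:ℤ)⟧, f = 0 :=
    IsRightApprox.forall_eq_zero_obj₃ hRF.2.2.1 (rot_of_distTriang _ hT) hD hr
  have hL : L ∈ leftPerpShift 𝒟 := (mem_leftPerpShift_iff hRF.2.2.2).2 hDL
  have hL𝒳 : L ∈ 𝒳 := hmax.2 L fun X₁ hX₁ X₂ hX₂ => forall_biprod_shift_eq_zero_iff.2
    ⟨⟨forall_obj₁_shift_obj₁_eq_zero hT (hL D hD) (hDL D hD) hMM,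
        forall_obj₁_shift_eq_zero_of_mem hRF.2.2.1 hRF.1 hT hX₂ hL
          (homZero_shiftSet_iff.1 hmax.1 D (hDX hD) X₂ hX₂) fun T hT => (hM' T hT).1⟩,
      ⟨forall_shift_obj₁_eq_zero_of_mem hRF.2.2.1 hRF.1 hT hX₁ (hXD hX₁) hDL hD
          fun T hT => (hM' T hT).2,
        homZero_shiftSet_iff.1 hmax.1 X₁ hX₁ X₂ hX₂⟩⟩
  exact ⟨mem_extClass_of_distTriang (rot_of_distTriang _ hT) hD (shift_mem_shiftSet hL𝒳 1),
    fun D' hD' => (hM' D' (h𝒟 hD')).1⟩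

end

/-- the `𝒟`-mutation of a maximal rigid torsion pair is again a
maximal rigid torsion pair. -/
theorem stmt14 (k : Type*) [Field k] [Linear k C]
    [∀ A B : C, Module.Finite k (A ⟶ B)] [IsIdempotentComplete C]
    (𝒳 𝒴 𝒟 : Set C) (hX : IsSubcat 𝒳) (hY : IsSubcat 𝒴) (hD : IsSubcat 𝒟)
    (hpair : IsTorsionPair 𝒳 𝒴)
    (hmax : IsMaximalRigid 𝒳)
    (hRF : RF 𝒟)
    (hDX : 𝒟 ⊆ 𝒳) (hXD : 𝒳 ⊆ shiftRightPerp 𝒟) :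
    IsTorsionPair (muInv 𝒳 𝒟) (muInv 𝒴 (shiftSet 𝒟 (1:ℤ))) ∧
    IsMaximalRigid (muInv 𝒳 𝒟) := by
  have hXD' : 𝒳 ⊆ leftPerpShift 𝒟 := hRF.2.2.2 ▸ hXD
  exact ⟨isTorsionPair_muInv hpair hX hY hD hmax.1 hRF hDX hXD',
    isMaximalRigid_muInv hX hmax hRF hDX hXD'⟩
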